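/- For k+1 ≤ n, the ascension function satisfies Asc_{k,n} = G_{k,n-1} * Wg_{k,n} = Wg_{k,n} * G_{k,n-1} in ℂ[S_k]. -/

import Mathlib

open Finset

/-- Convolution product in the group algebra `ℂ[S_k]`:
`(f * g)(π) = Σ_σ f(σ) g(σ⁻¹ π)`. -/
noncomputable def conv {k : ℕ} (f g : Equiv.Perm (Fin k) → ℂ) :
    Equiv.Perm (Fin k) → ℂ :=
  fun π => ∑ σ : Equiv.Perm (Fin k), f σ * g (σ⁻¹ * π)

/-- The number of cycles `κ(σ)` of a permutation (fixed points counted as cycles). -/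
noncomputable def cyc {k : ℕ} (σ : Equiv.Perm (Fin k)) : ℕ :=
  σ.cycleType.card + (Finset.univ.filter fun i => σ i = i).card

/-- The number of fixed points of a permutation. -/
noncomputable def fixCount {k : ℕ} (σ : Equiv.Perm (Fin k)) : ℕ :=
  (Finset.univ.filter fun i => σ i = i).card

/-- The Dirac function at the identity permutation. -/
noncomputable def deltaE {k : ℕ} : Equiv.Perm (Fin k) → ℂ :=
  fun π => if π = 1 then 1 else 0

/-- Rising factorial `z^{↑m} = z(z+1)⋯(z+m-1)`. -/
noncomputable def ascC (z : ℂ) (m : ℕ) : ℂ := ∏ j ∈ Finset.range m, (z + j)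

/-- Falling factorial `z^{↓m} = z(z-1)⋯(z-m+1)`. -/
noncomputable def descC (z : ℂ) (m : ℕ) : ℂ := ∏ j ∈ Finset.range m, (z - j)

/-- The function `G_{k,z}(σ) = z^{κ(σ)}` in `ℂ[S_k]`. -/
noncomputable def Gfun (k : ℕ) (z : ℂ) : Equiv.Perm (Fin k) → ℂ :=
  fun σ => z ^ (cyc σ)

/-- The ascension function
`Asc_{k,n}(σ) = Σ_{t=0}^{fix σ} (-1)^{k-t} C(fix σ, t)/n^{↑(k-t)}`. -/
noncomputable def AscFun (k n : ℕ) : Equiv.Perm (Fin k) → ℂ :=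
  fun σ => ∑ t ∈ Finset.range (fixCount σ + 1),
    (-1 : ℂ) ^ (k - t) * ((fixCount σ).choose t : ℂ) / ascC (n : ℂ) (k - t)

/-- The descension function
`Des_{k,n}(σ) = sgn(σ) Σ_{t=0}^{fix σ} C(fix σ, t)/n^{↓(k-t)}`. -/
noncomputable def DesFun (k n : ℕ) : Equiv.Perm (Fin k) → ℂ :=
  fun σ => ((Equiv.Perm.sign σ : ℤ) : ℂ) * ∑ t ∈ Finset.range (fixCount σ + 1),
    ((fixCount σ).choose t : ℂ) / descC (n : ℂ) (k - t)

/-!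
Writing `Asc_{k,n}(σ)` as a sum over the subsets `S` of the fixed points of `σ`, the value of
`Asc_{k,n} * G_{k,n}` at `π` becomes `∑_S (-1)^{|Sᶜ|} / n^{↑|Sᶜ|} ∑_{σ fixing S} n^{κ(σ⁻¹π)}`.
The inner sum is `n^{c_S(π)} n^{↑|Sᶜ|}`, where `c_S(π)` counts the cycles of `π` lying inside `S`:
for `s ∉ S`, a permutation `σ` fixing `S` is `swap s x * τ` with `x = σ s` and `τ` fixing `S ∪ {s}`,
and among the `x ∉ S` exactly one makes the cycle of `s` in `swap s x * π` stay inside `S ∪ {s}`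
while all other cycles inside `S` are untouched; this gives the factor `n + |(S ∪ {s})ᶜ|`.
Inclusion–exclusion over `S` turns `∑_S (-1)^{|Sᶜ|} n^{c_S(π)}` into `(n - 1)^{κ(π)}`, so
`Asc_{k,n} * G_{k,n} = G_{k,n-1}`; convolving with `Wg_{k,n}` and using that the class function
`G_{k,n-1}` is central gives both identities.
-/

namespace Equiv.Perm

variable {α : Type*} [DecidableEq α] {π : Perm α} {a b s x : α}

theorem pow_swap_mul_apply_of_forall_ne {n : ℕ}
    (h : ∀ i < n, (π ^ (i + 1)) a ≠ s ∧ (π ^ (i + 1)) a ≠ x) :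
    ((swap s x * π) ^ n) a = (π ^ n) a := by
  induction n with
  | zero => rfl
  | succ n ih =>
    have hn := h n n.lt_succ_self
    rw [pow_succ', mul_apply, ih fun i hi => h i (Nat.lt_succ_of_lt hi), mul_apply,
      ← mul_apply π, ← pow_succ']
    exact swap_apply_of_ne_of_ne hn.1 hn.2

variable [Fintype α]

instance (π : Perm α) : DecidableRel (SameCycle.setoid π) :=
  inferInstanceAs (DecidableRel π.SameCycle)

def cyclePartition (π : Perm α) : Finpartition (univ : Finset α) :=
  Finpartition.ofSetoid (SameCycle.setoid π)

variable {S : Finset α}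

theorem mem_cyclePartition_part : b ∈ (cyclePartition π).part a ↔ π.SameCycle a b :=
  Finpartition.mem_part_ofSetoid_iff_rel

theorem mem_cyclePartition_part_self : a ∈ (cyclePartition π).part a :=
  (cyclePartition π).mem_part (mem_univ a)

theorem cyclePartition_part_mem_parts : (cyclePartition π).part a ∈ (cyclePartition π).parts :=
  (cyclePartition π).part_mem.2 (mem_univ a)

theorem pow_apply_mem_cyclePartition_part (i : ℕ) : (π ^ i) a ∈ (cyclePartition π).part a :=
  mem_cyclePartition_part.2 ⟨i, by simp⟩

theorem exists_pow_apply_eq_of_mem_cyclePartition_part (h : b ∈ (cyclePartition π).part a) :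
    ∃ i : ℕ, (π ^ i) a = b := by
  obtain ⟨i, -, -, hi⟩ := (mem_cyclePartition_part.1 h).exists_pow_eq π
  exact ⟨i, hi⟩

theorem cyclePartition_part_eq_singleton (h : π a = a) : (cyclePartition π).part a = {a} := by
  ext b
  rw [mem_cyclePartition_part, mem_singleton]
  exact ⟨fun hb => (hb.eq_of_left h).symm, fun hb => hb ▸ SameCycle.refl π a⟩

theorem cyclePartition_part_eq_support_cycleOf (h : a ∈ π.support) :
    (cyclePartition π).part a = (π.cycleOf a).support := by
  ext b
  rw [mem_cyclePartition_part, mem_support_cycleOf_iff, and_iff_left h]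

theorem card_filter_cyclePartition_parts_subset_support (π : Perm α) :
    #{O ∈ (cyclePartition π).parts | O ⊆ π.support} = #π.cycleFactorsFinset := by
  symm
  refine card_bij (fun c _ => c.support) (fun c hc => ?_) (fun c hc c' hc' h => ?_)
    (fun O hO => ?_)
  · obtain ⟨a, ha⟩ := (mem_cycleFactorsFinset_iff.1 hc).1.nonempty_support
    have haπ : a ∈ π.support := mem_cycleFactorsFinset_support_le hc ha
    rw [mem_filter, cycle_is_cycleOf ha hc, ← cyclePartition_part_eq_support_cycleOf haπ]
    exact ⟨cyclePartition_part_mem_parts,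
      cyclePartition_part_eq_support_cycleOf haπ ▸ support_cycleOf_le π a⟩
  · obtain ⟨a, ha⟩ := (mem_cycleFactorsFinset_iff.1 hc).1.nonempty_support
    rw [cycle_is_cycleOf ha hc, cycle_is_cycleOf (h ▸ ha) hc']
  · obtain ⟨hO, hOsupp⟩ := mem_filter.1 hO
    obtain ⟨a, ha⟩ := (cyclePartition π).nonempty_of_mem_parts hO
    refine ⟨π.cycleOf a, cycleOf_mem_cycleFactorsFinset_iff.2 (hOsupp ha), ?_⟩
    rw [← cyclePartition_part_eq_support_cycleOf (hOsupp ha),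
      (cyclePartition π).part_eq_of_mem hO ha]

theorem card_filter_cyclePartition_parts_not_subset_support (π : Perm α) :
    #{O ∈ (cyclePartition π).parts | ¬O ⊆ π.support} = #{i | π i = i} := by
  symm
  refine card_bij (fun a _ => {a}) (fun a ha => ?_) (fun a _ b _ h => singleton_injective h)
    (fun O hO => ?_)
  · rw [mem_filter] at ha ⊢
    refine ⟨?_, by simpa [mem_support] using ha.2⟩
    rw [← cyclePartition_part_eq_singleton ha.2]
    exact cyclePartition_part_mem_parts
  · obtain ⟨hO, hOsupp⟩ := mem_filter.1 hO
    obtain ⟨a, ha, haπ⟩ := not_subset.1 hOsupp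
    rw [notMem_support] at haπ
    refine ⟨a, by simpa using haπ, ?_⟩
    rw [← cyclePartition_part_eq_singleton haπ, (cyclePartition π).part_eq_of_mem hO ha]

theorem card_cyclePartition_parts (π : Perm α) :
    #(cyclePartition π).parts = π.cycleType.card + #{i | π i = i} := by
  rw [← card_filter_add_card_filter_not (· ⊆ π.support),
    card_filter_cyclePartition_parts_subset_support,
    card_filter_cyclePartition_parts_not_subset_support, cycleType_def, Multiset.card_map]
  rfl

theorem cyclePartition_part_subset_of_pow_apply_eq_self {j : ℕ} (hj : 0 < j)
    (hper : (π ^ j) a = a) (hS : ∀ i < j, (π ^ i) a ∈ S) : (cyclePartition π).part a ⊆ S := by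
  intro b hb
  obtain ⟨n, rfl⟩ := exists_pow_apply_eq_of_mem_cyclePartition_part hb
  rw [← Nat.mod_add_div n j, pow_add, mul_apply, pow_mul,
    pow_apply_eq_self_of_apply_eq_self hper]
  exact hS _ (Nat.mod_lt n hj)

theorem cyclePartition_swap_mul_part (hS : (cyclePartition π).part a ⊆ S)
    (hs : s ∉ (cyclePartition π).part a) (hx : x ∉ S) :
    (cyclePartition (swap s x * π)).part a = (cyclePartition π).part a := by
  have hpow (n : ℕ) : ((swap s x * π) ^ n) a = (π ^ n) a :=
    pow_swap_mul_apply_of_forall_ne fun i _ =>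
      have hi := pow_apply_mem_cyclePartition_part (π := π) (a := a) (i + 1)
      ⟨fun he => hs (he ▸ hi), fun he => hx (hS (he ▸ hi))⟩
  ext b
  constructor <;> intro hb
  · obtain ⟨n, rfl⟩ := exists_pow_apply_eq_of_mem_cyclePartition_part hb
    rw [hpow]
    exact pow_apply_mem_cyclePartition_part n
  · obtain ⟨n, rfl⟩ := exists_pow_apply_eq_of_mem_cyclePartition_part hb
    rw [← hpow]
    exact pow_apply_mem_cyclePartition_part n

/-- The witness `y` is the first point of the walk `π s, π² s, …` that lies outside `S`. -/
theorem exists_swap_mul_part_subset_insert_iff (π : Perm α) (hs : s ∉ S) :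
    ∃ y ∈ Sᶜ, ∀ x ∈ Sᶜ, (cyclePartition (swap s x * π)).part s ⊆ insert s S ↔ x = y := by
  have hex : ∃ j, 0 < j ∧ (π ^ j) s ∉ S :=
    ⟨orderOf π, orderOf_pos π, by rwa [pow_orderOf_eq_one, one_apply]⟩
  obtain ⟨hj, hjS⟩ := Nat.find_spec hex
  set j := Nat.find hex
  have hmin (i : ℕ) (hi : 0 < i) (hij : i < j) : (π ^ i) s ∈ S := by
    by_contra h
    exact Nat.find_min hex hij ⟨hi, h⟩
  refine ⟨(π ^ j) s, mem_compl.2 hjS, fun x hx => ?_⟩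
  have hpow (i : ℕ) (hi : i < j) : ((swap s x * π) ^ i) s = (π ^ i) s :=
    pow_swap_mul_apply_of_forall_ne fun l hl =>
      have hl' := hmin (l + 1) l.succ_pos (by omega)
      ⟨ne_of_mem_of_not_mem hl' hs, ne_of_mem_of_not_mem hl' (mem_compl.1 hx)⟩
  have hpow_j : ((swap s x * π) ^ j) s = swap s x ((π ^ j) s) := by
    have h := hpow (j - 1) (by omega)
    rw [← Nat.sub_add_cancel hj, pow_succ', mul_apply, h, mul_apply, ← mul_apply π, ← pow_succ']
  constructor
  · intro hsub
    by_contra hne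
    have hmem := hsub (pow_apply_mem_cyclePartition_part j)
    rw [hpow_j, mem_insert] at hmem
    by_cases hys : (π ^ j) s = s
    · rw [hys, swap_apply_left] at hmem
      exact hmem.elim (fun h => hne (h.trans hys.symm)) (mem_compl.1 hx)
    · rw [swap_apply_of_ne_of_ne hys (Ne.symm hne)] at hmem
      exact hmem.elim hys hjS
  · rintro rfl
    refine cyclePartition_part_subset_of_pow_apply_eq_self hj
      (by rw [hpow_j, swap_apply_right]) fun i hi => ?_
    rw [hpow i hi]
    rcases i.eq_zero_or_pos with rfl | hi0
    · exact mem_insert_self s S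
    · exact mem_insert_of_mem (hmin i hi0 hi)

def numCyclesIn (S : Finset α) (π : Perm α) : ℕ :=
  #{O ∈ (cyclePartition π).parts | O ⊆ S}

theorem numCyclesIn_univ (π : Perm α) : numCyclesIn univ π = #(cyclePartition π).parts := by
  simp [numCyclesIn]

theorem numCyclesIn_insert (π : Perm α) (hs : s ∉ S) :
    numCyclesIn (insert s S) π =
      numCyclesIn S π + if (cyclePartition π).part s ⊆ insert s S then 1 else 0 := by
  rw [numCyclesIn, ← card_filter_add_card_filter_not (s ∈ ·), add_comm, filter_filter,
    filter_filter]
  congr 1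
  · exact congrArg card (filter_congr fun O _ =>
      ⟨fun h => (subset_insert_iff_of_notMem h.2).1 h.1,
        fun h => ⟨h.trans (subset_insert s S), fun hsO => hs (h hsO)⟩⟩)
  · have h : {O ∈ (cyclePartition π).parts | O ⊆ insert s S ∧ s ∈ O} =
        ({(cyclePartition π).part s} : Finset (Finset α)).filter (· ⊆ insert s S) := by
      ext O
      simp only [mem_filter, mem_singleton]
      constructor
      · rintro ⟨hO, hsub, hsO⟩
        exact ⟨((cyclePartition π).part_eq_of_mem hO hsO).symm, hsub⟩
      · rintro ⟨rfl, hsub⟩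
        exact ⟨cyclePartition_part_mem_parts, hsub, mem_cyclePartition_part_self⟩
    rw [h, filter_singleton]
    split_ifs <;> rfl

theorem numCyclesIn_swap_mul (π : Perm α) (hs : s ∉ S) (hx : x ∉ S) :
    numCyclesIn S (swap s x * π) = numCyclesIn S π := by
  suffices h : ∀ ρ : Perm α, {O ∈ (cyclePartition ρ).parts | O ⊆ S} ⊆
      {O ∈ (cyclePartition (swap s x * ρ)).parts | O ⊆ S} by
    refine congrArg card (Subset.antisymm ?_ (h π))
    simpa only [← mul_assoc, swap_mul_self, one_mul] using h (swap s x * π)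
  intro ρ O hO
  obtain ⟨hO, hOS⟩ := mem_filter.1 hO
  obtain ⟨a, ha⟩ := (cyclePartition ρ).nonempty_of_mem_parts hO
  rw [← (cyclePartition ρ).part_eq_of_mem hO ha] at hOS ⊢
  have hpart := cyclePartition_swap_mul_part hOS (fun h => hs (hOS h)) hx
  rw [mem_filter, ← hpart]
  exact ⟨cyclePartition_part_mem_parts, hpart ▸ hOS⟩

theorem sum_pow_numCyclesIn_insert_swap_mul {R : Type*} [CommSemiring R] (z : R) (π : Perm α)
    (hs : s ∉ S) :
    ∑ x ∈ Sᶜ, z ^ numCyclesIn (insert s S) (swap s x * π) =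
      z ^ numCyclesIn S π * (z + #(insert s S)ᶜ) := by
  obtain ⟨y, hy, hiff⟩ := exists_swap_mul_part_subset_insert_iff π hs
  have hc (x) (hx : x ∈ Sᶜ) : numCyclesIn (insert s S) (swap s x * π) =
      numCyclesIn S π + if x = y then 1 else 0 := by
    rw [numCyclesIn_insert _ hs, numCyclesIn_swap_mul π hs (mem_compl.1 hx)]
    exact congrArg _ (if_congr (hiff x hx) rfl rfl)
  have hcard : #(insert s S)ᶜ = #(Sᶜ.erase y) := by
    rw [compl_insert, card_erase_of_mem (mem_compl.2 hs), card_erase_of_mem hy]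
  rw [sum_congr rfl fun x hx => by rw [hc x hx], ← add_sum_erase _ _ hy, if_pos rfl,
    sum_congr rfl fun x hx => by rw [if_neg (ne_of_mem_erase hx), add_zero], sum_const, hcard,
    nsmul_eq_mul, pow_succ]
  ring

def fixingPerms (S : Finset α) : Finset (Perm α) := {σ | ∀ a ∈ S, σ a = a}

theorem mem_fixingPerms {σ : Perm α} : σ ∈ fixingPerms S ↔ ∀ a ∈ S, σ a = a := by
  simp [fixingPerms]

theorem sum_fixingPerms_eq_sum_sum_swap_mul {M : Type*} [AddCommMonoid M] (g : Perm α → M)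
    (hs : s ∉ S) :
    ∑ σ ∈ fixingPerms S, g σ =
      ∑ x ∈ Sᶜ, ∑ τ ∈ fixingPerms (insert s S), g (swap s x * τ) := by
  have hmaps (σ : Perm α) (hσ : σ ∈ fixingPerms S) : σ s ∈ Sᶜ := by
    refine mem_compl.2 fun hsS => hs ?_
    rwa [σ.injective (mem_fixingPerms.1 hσ _ hsS)] at hsS
  rw [← sum_fiberwise_of_maps_to hmaps]
  refine sum_congr rfl fun x hx => (sum_nbij' (swap s x * ·) (swap s x * ·) ?_ ?_
    (fun τ _ => swap_mul_self_mul s x τ) (fun σ _ => swap_mul_self_mul s x σ)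
    (fun τ _ => rfl)).symm
  · intro τ hτ
    simp only [mem_filter, mem_fixingPerms, forall_mem_insert] at hτ ⊢
    refine ⟨fun a ha => ?_, by rw [mul_apply, hτ.1, swap_apply_left]⟩
    rw [mul_apply, hτ.2 a ha, swap_apply_of_ne_of_ne (ne_of_mem_of_not_mem ha hs)
      (ne_of_mem_of_not_mem ha (mem_compl.1 hx))]
  · intro σ hσ
    simp only [mem_filter, mem_fixingPerms, forall_mem_insert] at hσ ⊢
    refine ⟨by rw [mul_apply, hσ.2, swap_apply_right], fun a ha => ?_⟩
    rw [mul_apply, hσ.1 a ha, swap_apply_of_ne_of_ne (ne_of_mem_of_not_mem ha hs)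
      (ne_of_mem_of_not_mem ha (mem_compl.1 hx))]

theorem sum_fixingPerms_pow_card_cyclePartition_parts {R : Type*} [CommSemiring R] (z : R)
    (S : Finset α) (π : Perm α) :
    ∑ σ ∈ fixingPerms S, z ^ #(cyclePartition (σ⁻¹ * π)).parts =
      z ^ numCyclesIn S π * ∏ j ∈ range #Sᶜ, (z + j) := by
  generalize hn : #Sᶜ = n
  induction n generalizing S π with
  | zero =>
    obtain rfl : S = univ := (compl_eq_empty_iff S).1 (card_eq_zero.1 hn)
    have h1 : fixingPerms (univ : Finset α) = {1} := by
      ext σ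
      simp [mem_fixingPerms, Equiv.Perm.ext_iff]
    rw [h1, sum_singleton, inv_one, one_mul, numCyclesIn_univ, prod_range_zero, mul_one]
  | succ n ih =>
    obtain ⟨s, hs⟩ := card_pos.1 (by rw [hn]; exact n.succ_pos)
    have hn' : #(insert s S)ᶜ = n := by
      rw [compl_insert, card_erase_of_mem hs, hn, Nat.add_sub_cancel]
    rw [sum_fixingPerms_eq_sum_sum_swap_mul _ (mem_compl.1 hs)]
    calc ∑ x ∈ Sᶜ, ∑ τ ∈ fixingPerms (insert s S),
          z ^ #(cyclePartition ((swap s x * τ)⁻¹ * π)).parts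
        = ∑ x ∈ Sᶜ, z ^ numCyclesIn (insert s S) (swap s x * π) * ∏ j ∈ range n, (z + j) := by
          refine sum_congr rfl fun x _ => ?_
          simp only [mul_inv_rev, swap_inv, mul_assoc]
          exact ih _ _ hn'
      _ = z ^ numCyclesIn S π * ∏ j ∈ range (n + 1), (z + j) := by
          rw [← sum_mul, sum_pow_numCyclesIn_insert_swap_mul z π (mem_compl.1 hs), hn',
            prod_range_succ]
          ring

end Equiv.Perm

theorem Finset.sum_superset_neg_one_pow_card_compl {α R : Type*} [Fintype α] [DecidableEq α]
    [Ring R] (A : Finset α) :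
    ∑ S : Finset α with A ⊆ S, (-1 : R) ^ #Sᶜ = if A = univ then 1 else 0 := by
  have h := congrArg (Int.cast : ℤ → R) (sum_powerset_neg_one_pow_card (x := Aᶜ))
  push_cast at h
  simp only [compl_eq_empty_iff] at h
  rw [← h]
  refine sum_nbij' compl compl (fun S hS => ?_) (fun T hT => ?_) (fun S _ => compl_compl S)
    (fun T _ => compl_compl T) (fun _ _ => rfl)
  · simpa [compl_subset_compl] using hS
  · simpa [subset_compl_comm] using hT

namespace Finpartition

variable {α : Type*} [DecidableEq α] {s : Finset α} (P : Finpartition s)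

theorem eq_parts_of_sup_id_eq {W : Finset (Finset α)} (hW : W ⊆ P.parts) (hsup : W.sup id = s) :
    W = P.parts := by
  refine Subset.antisymm hW fun O hO => ?_
  obtain ⟨a, ha⟩ := P.nonempty_of_mem_parts hO
  obtain ⟨O', hO', haO'⟩ := mem_sup.1 (hsup ▸ P.le hO ha : a ∈ W.sup id)
  rwa [P.eq_of_mem_parts hO (hW hO') ha haO']

theorem sum_neg_one_pow_card_compl_mul_pow_card_filter_subset [Fintype α] {R : Type*} [CommRing R]
    (P : Finpartition (univ : Finset α)) (z : R) :
    ∑ S : Finset α, (-1 : R) ^ #Sᶜ * z ^ #{O ∈ P.parts | O ⊆ S} = (z - 1) ^ #P.parts := by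
  have hexpand (S : Finset α) : z ^ #{O ∈ P.parts | O ⊆ S} =
      ∑ W ∈ P.parts.powerset, if W.sup id ⊆ S then (z - 1) ^ #W else 0 := by
    have h : {W ∈ P.parts.powerset | W.sup id ⊆ S} = {O ∈ P.parts | O ⊆ S}.powerset := by
      ext W
      simp only [mem_filter, mem_powerset, Finset.sup_le_iff, id, subset_iff (s₁ := W)]
      exact ⟨fun h O hO => ⟨h.1 hO, h.2 O hO⟩,
        fun h => ⟨fun O hO => (h hO).1, fun O hO => (h hO).2⟩⟩
    have hbinom := sum_pow_mul_eq_add_pow (z - 1) 1 {O ∈ P.parts | O ⊆ S}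
    simp only [one_pow, mul_one, sub_add_cancel] at hbinom
    rw [← sum_filter, h, hbinom]
  have hinner (W : Finset (Finset α)) :
      ∑ S : Finset α, (-1 : R) ^ #Sᶜ * (if W.sup id ⊆ S then (z - 1) ^ #W else 0) =
        if W.sup id = univ then (z - 1) ^ #W else 0 := by
    simp only [mul_ite, mul_zero]
    rw [← sum_filter, ← sum_mul, sum_superset_neg_one_pow_card_compl, ite_mul, one_mul,
      zero_mul]
  simp only [hexpand, mul_sum]
  rw [sum_comm, sum_congr rfl fun W _ => hinner W, sum_eq_single_of_mem P.parts
    (mem_powerset_self _) fun W hW hne => if_neg (mt (P.eq_parts_of_sup_id_eq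
      (mem_powerset.1 hW)) hne), if_pos P.sup_parts]

end Finpartition

section GroupAlgebra

open Equiv Equiv.Perm

variable {k : ℕ}

theorem conv_assoc (f g h : Perm (Fin k) → ℂ) : conv (conv f g) h = conv f (conv g h) := by
  funext π
  simp only [conv, sum_mul, mul_sum]
  rw [sum_comm]
  refine sum_congr rfl fun σ _ => Fintype.sum_equiv (Equiv.mulLeft σ⁻¹) _ _ fun τ => ?_
  rw [coe_mulLeft, ← mul_assoc, mul_inv_rev, inv_inv, mul_assoc τ⁻¹, mul_inv_cancel_left]

theorem conv_deltaE (f : Perm (Fin k) → ℂ) : conv f deltaE = f := by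
  funext π
  simp only [conv, deltaE, mul_ite, mul_one, mul_zero, inv_mul_eq_one, sum_ite_eq', mem_univ,
    if_true]

theorem conv_comm_of_conj_invariant {f : Perm (Fin k) → ℂ}
    (hf : ∀ τ σ, f (τ * σ * τ⁻¹) = f σ) (g : Perm (Fin k) → ℂ) : conv f g = conv g f := by
  funext π
  refine Fintype.sum_equiv ((Equiv.inv _).trans (Equiv.mulRight π)) _ _ fun σ => ?_
  simp only [coe_trans, Function.comp_apply, Equiv.inv_apply, coe_mulRight, mul_inv_rev, inv_inv]
  rw [mul_comm, ← hf π⁻¹ σ, inv_inv]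

theorem cyc_conj (τ σ : Perm (Fin k)) : cyc (τ * σ * τ⁻¹) = cyc σ := by
  have hfix (ρ : Perm (Fin k)) : #{i | ρ i = i} = #ρ.supportᶜ := by
    congr 1; ext; simp [mem_support]
  rw [cyc, cyc, cycleType_conj, hfix, hfix, card_compl, card_compl, support_conj, card_map]

theorem cyc_eq_card_cyclePartition_parts (σ : Perm (Fin k)) :
    cyc σ = #(cyclePartition σ).parts :=
  (card_cyclePartition_parts σ).symm

theorem AscFun_eq_sum_powerset_fixed (n : ℕ) (σ : Perm (Fin k)) :
    AscFun k n σ = ∑ S ∈ ({i | σ i = i} : Finset (Fin k)).powerset, (-1) ^ #Sᶜ / ascC n #Sᶜ := by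
  rw [sum_congr rfl fun S _ => by rw [card_compl, Fintype.card_fin],
    sum_powerset_apply_card (fun m => (-1 : ℂ) ^ (k - m) / ascC n (k - m))]
  simp only [AscFun, fixCount, nsmul_eq_mul, mul_div_assoc]
  exact sum_congr rfl fun t _ => by ring

theorem ascC_natCast_ne_zero {n : ℕ} (hn : 0 < n) (m : ℕ) : ascC n m ≠ 0 :=
  prod_ne_zero_iff.2 fun j _ => by exact_mod_cast (Nat.add_pos_left hn j).ne'

theorem conv_AscFun_Gfun {n : ℕ} (hn : 0 < n) :
    conv (AscFun k n) (Gfun k n) = Gfun k ((n - 1 : ℕ) : ℂ) := by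
  funext π
  calc conv (AscFun k n) (Gfun k n) π
      = ∑ S : Finset (Fin k), (-1) ^ #Sᶜ / ascC n #Sᶜ *
          ∑ σ ∈ fixingPerms S, (n : ℂ) ^ #(cyclePartition (σ⁻¹ * π)).parts := by
        simp only [conv, AscFun_eq_sum_powerset_fixed, Gfun, cyc_eq_card_cyclePartition_parts,
          sum_mul, mul_sum]
        exact sum_comm' fun σ S => by simp [mem_fixingPerms, subset_iff]
    _ = ∑ S : Finset (Fin k), (-1) ^ #Sᶜ * (n : ℂ) ^ numCyclesIn S π := by
        refine sum_congr rfl fun S _ => ?_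
        rw [sum_fixingPerms_pow_card_cyclePartition_parts]
        field_simp [ascC_natCast_ne_zero hn]
        exact mul_comm _ _
    _ = Gfun k ((n - 1 : ℕ) : ℂ) π := by
        rw [Gfun, cyc_eq_card_cyclePartition_parts, Nat.cast_sub hn, Nat.cast_one]
        exact (cyclePartition π).sum_neg_one_pow_card_compl_mul_pow_card_filter_subset (n : ℂ)

end GroupAlgebra

theorem ascension_eq_G_conv_Wg_general (k n : ℕ) (h : k + 1 ≤ n)
    (Wgn : Equiv.Perm (Fin k) → ℂ)
    (h1 : conv (Gfun k (n : ℂ)) Wgn = deltaE) :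
    AscFun k n = conv (Gfun k ((n - 1 : ℕ) : ℂ)) Wgn ∧
    AscFun k n = conv Wgn (Gfun k ((n - 1 : ℕ) : ℂ)) := by
  have hAsc : AscFun k n = conv (Gfun k ((n - 1 : ℕ) : ℂ)) Wgn := by
    rw [← conv_AscFun_Gfun (by omega), conv_assoc, h1, conv_deltaE]
  refine ⟨hAsc, hAsc.trans (conv_comm_of_conj_invariant (fun τ σ => ?_) Wgn)⟩
  simp only [Gfun, cyc_conj]

/-- For `k + 1 ≤ n`, the ascension function satisfies
`Asc_{k,n} = G_{k,n-1} * Wg_{k,n} = Wg_{k,n} * G_{k,n-1}` in `ℂ[S_k]`. -/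
theorem ascension_eq_G_conv_Wg (k n : ℕ) (h : k + 1 ≤ n)
    (Wgn : Equiv.Perm (Fin k) → ℂ)
    (h1 : conv (Gfun k (n : ℂ)) Wgn = deltaE)
    (h1' : conv Wgn (Gfun k (n : ℂ)) = deltaE) :
    AscFun k n = conv (Gfun k ((n - 1 : ℕ) : ℂ)) Wgn ∧
    AscFun k n = conv Wgn (Gfun k ((n - 1 : ℕ) : ℂ)) :=
  ascension_eq_G_conv_Wg_general k n h Wgn h1
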